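/- arXiv:1611.05804 — 6 statements merged into one kernel-verified Lean document; each statement's English description precedes it below -/
import Mathlib

section
/- The square roots of distinct prime numbers are linearly independent over the rational numbers: if p_1 < p_2 < ⋯ < p_n are distinct primes and q_0, q_1, …, q_n ∈ ℚ satisfy q_0 + q_1√p_1 + ⋯ + q_n√p_n = 0, then all q_i = 0. -/
/-!
Let `K_s = ℚ(√p : p ∈ s)` for a finite set `s` of primes. By induction on `s`, `√m ∉ K_s` for
every squarefree `m > 1` prime to `s`: writing `K_{s ∪ {p}} = K_s(√p)`, an element `y` of
`K_s(√p)` with `y² ∈ K_s` lies in `K_s` or has `y√p ∈ K_s`, so `√m ∈ K_{s ∪ {p}}` would put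
`√m` or `√(mp)` in `K_s`. A nontrivial rational relation among `1, √p₁, …, √pₙ` would
express some `√pⱼ` in `ℚ(√pᵢ : i ≠ j)`.
-/

open IntermediateField

namespace IntermediateField

variable {F E : Type*} [Field F] [Field E] [Algebra F E]

open Polynomial in
theorem exists_eq_add_mul_of_mem_adjoin_simple {α x : E} {c : F}
    (hα : α ^ 2 = algebraMap F E c) (hx : x ∈ F⟮α⟯) :
    ∃ a b : F, x = algebraMap F E a + algebraMap F E b * α := by
  have hg : (X ^ 2 - C c).Monic := monic_X_pow_sub_C c two_ne_zero
  have hroot : aeval α (X ^ 2 - C c) = 0 := by simp [hα]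
  have hint : IsIntegral F α := ⟨_, hg, by rwa [← aeval_def]⟩
  rw [← mem_toSubalgebra, adjoin_simple_toSubalgebra_of_isAlgebraic hint.isAlgebraic,
    Algebra.adjoin_singleton_eq_range_aeval] at hx
  obtain ⟨P, rfl⟩ := hx
  have hdeg : (P %ₘ (X ^ 2 - C c)).natDegree ≤ 1 := by
    have hne : X ^ 2 - C c ≠ 1 := fun h => by
      simpa [h] using natDegree_X_pow_sub_C (n := 2) (r := c)
    have := natDegree_modByMonic_lt P hg hne
    rw [natDegree_X_pow_sub_C] at this
    omega
  obtain ⟨b, a, hab⟩ := exists_eq_X_add_C_of_natDegree_le_one hdeg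
  refine ⟨a, b, ?_⟩
  change aeval α P = _
  rw [← aeval_modByMonic_eq_self_of_root hroot, hab]
  simp [add_comm]

theorem mem_or_mul_mem_of_sq_mem_adjoin_simple [NeZero (2 : E)] {K : IntermediateField F E}
    {α y : E} (hαK : α ∉ K) (hα : α ^ 2 ∈ K) (hy : y ∈ K⟮α⟯) (hyK : y ^ 2 ∈ K) :
    y ∈ K ∨ y * α ∈ K := by
  obtain ⟨a, b, rfl⟩ := exists_eq_add_mul_of_mem_adjoin_simple (c := ⟨α ^ 2, hα⟩) rfl hy
  simp only [algebraMap_apply] at hyK ⊢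
  -- `(a + bα)² = a² + b²α² + 2abα`, so the cross term `2abα` lies in `K`.
  have hab : (a : E) = 0 ∨ (b : E) = 0 := by
    by_contra! ⟨ha, hb⟩
    refine hαK ?_
    have hα_eq : α = ((a + b * α) ^ 2 - a ^ 2 - b ^ 2 * α ^ 2) / (2 * a * b) := by
      field_simp
      ring
    rw [hα_eq]
    exact div_mem (sub_mem (sub_mem hyK (pow_mem a.2 2)) (mul_mem (pow_mem b.2 2) hα))
      (mul_mem (mul_mem (ofNat_mem K 2) a.2) b.2)
  rcases hab with ha | hb
  · right
    rw [ha, zero_add, mul_assoc, ← sq]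
    exact mul_mem b.2 hα
  · left
    rw [hb, zero_mul, add_zero]
    exact a.2

theorem mem_adjoin_of_linear_relation {ι : Type*} [Fintype ι] [DecidableEq ι] {x : ι → E}
    {c₀ : F} {c : ι → F} (h : algebraMap F E c₀ + ∑ i, algebraMap F E (c i) * x i = 0)
    {j : ι} (hj : c j ≠ 0) :
    x j ∈ adjoin F (x '' ↑(Finset.univ.erase j)) := by
  set K := adjoin F (x '' ↑(Finset.univ.erase j))
  rw [← Finset.add_sum_erase _ _ (Finset.mem_univ j)] at h
  have hx : x j = -(algebraMap F E c₀ + ∑ i ∈ Finset.univ.erase j, algebraMap F E (c i) * x i) /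
      algebraMap F E (c j) := by
    rw [eq_div_iff ((map_ne_zero _).mpr hj)]
    linear_combination h
  rw [hx]
  refine div_mem (neg_mem (add_mem (algebraMap_mem K c₀) (sum_mem fun i hi => ?_)))
    (algebraMap_mem K (c j))
  exact mul_mem (algebraMap_mem K (c i)) (subset_adjoin F _ ⟨i, hi, rfl⟩)

end IntermediateField

theorem sqrt_natCast_notMem_adjoin_sqrt_primes (s : Finset ℕ) (hs : ∀ p ∈ s, p.Prime) {m : ℕ}
    (hm : Squarefree m) (hm1 : 1 < m) (hdvd : ∀ p ∈ s, ¬ p ∣ m) :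
    √(m : ℝ) ∉ adjoin ℚ ((fun k : ℕ => √(k : ℝ)) '' s) := by
  induction s using Finset.induction_on generalizing m with
  | empty =>
    rw [Finset.coe_empty, Set.image_empty, adjoin_empty, mem_bot]
    refine irrational_sqrt_natCast_iff.mpr ?_
    rintro ⟨k, rfl⟩
    have hk : k = 1 := Nat.isUnit_iff.mp (hm k dvd_rfl)
    simp [hk] at hm1
  | @insert p s hps ih =>
    have hp := hs p (Finset.mem_insert_self p s)
    have hs' : ∀ q ∈ s, q.Prime := fun q hq => hs q (Finset.mem_insert_of_mem hq)
    have hdvd' : ∀ q ∈ s, ¬ q ∣ m := fun q hq => hdvd q (Finset.mem_insert_of_mem hq)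
    have hdvdp : ∀ q ∈ s, ¬ q ∣ p := fun q hq hqp =>
      hps ((Nat.prime_dvd_prime_iff_eq (hs' q hq) hp).mp hqp ▸ hq)
    set K := adjoin ℚ ((fun k : ℕ => √(k : ℝ)) '' s)
    have hsqK (n : ℕ) : √(n : ℝ) ^ 2 ∈ K := by
      rw [Real.sq_sqrt (Nat.cast_nonneg n)]
      exact _root_.natCast_mem K n
    rw [Finset.coe_insert, Set.image_insert_eq, ← Set.union_singleton, ← adjoin_adjoin_left,
      mem_restrictScalars]
    intro hmem
    rcases mem_or_mul_mem_of_sq_mem_adjoin_simple (ih hs' hp.squarefree hp.one_lt hdvdp)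
      (hsqK p) hmem (hsqK m) with h | h
    · exact ih hs' hm hm1 hdvd' h
    · rw [← Real.sqrt_mul (Nat.cast_nonneg m), ← Nat.cast_mul] at h
      have hcop : m.Coprime p :=
        ((Nat.Prime.coprime_iff_not_dvd hp).mpr (hdvd p (Finset.mem_insert_self p s))).symm
      refine ih hs' ((Nat.squarefree_mul hcop).mpr ⟨hm, hp.squarefree⟩)
        (by nlinarith [hp.one_lt]) (fun q hq hqmp => ?_) h
      rcases (hs' q hq).dvd_mul.mp hqmp with h' | h'
      exacts [hdvd' q hq h', hdvdp q hq h']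

/-- Square roots of distinct primes are linearly independent over `ℚ`:
if `q₀ + q₁√p₁ + ⋯ + qₙ√pₙ = 0` with the `pᵢ` distinct primes and `qᵢ ∈ ℚ`,
then all `qᵢ = 0`. -/
theorem sqrt_primes_rat_linearIndependent (n : ℕ) (p : Fin n → ℕ)
    (hp : ∀ i, (p i).Prime) (hinj : Function.Injective p)
    (q₀ : ℚ) (q : Fin n → ℚ)
    (h : (q₀ : ℝ) + ∑ i, (q i : ℝ) * Real.sqrt (p i) = 0) :
    q₀ = 0 ∧ ∀ i, q i = 0 := by
  have hq (j : Fin n) : q j = 0 := by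
    by_contra hj
    have hmem := mem_adjoin_of_linear_relation (F := ℚ) (x := fun i => √(p i : ℝ)) h hj
    rw [← Set.image_image (fun k : ℕ => √(k : ℝ)), ← Finset.coe_image] at hmem
    refine sqrt_natCast_notMem_adjoin_sqrt_primes _ ?_ (hp j).squarefree (hp j).one_lt ?_ hmem
    · simp only [Finset.mem_image]
      rintro _ ⟨i, -, rfl⟩
      exact hp i
    · simp only [Finset.mem_image, Finset.mem_erase]
      rintro _ ⟨i, ⟨hij, -⟩, rfl⟩ hdvd
      exact hij (hinj ((Nat.prime_dvd_prime_iff_eq (hp i) (hp j)).mp hdvd))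
  refine ⟨?_, hq⟩
  simpa [hq] using h
end

section
/- Let G be a locally compact abelian group, H a closed subgroup of the LCA group ℝ^m × G with first and second canonical projections p₁, p₂. If H is discrete and p₂ restricted to H is injective, and S ⊆ ℝ^m and K ⊆ G are compact, then the set Λ = {p₂(h) : h ∈ H, p₁(h) ∈ S} is uniformly discrete in G. -/
/-!
Differences of points of `Λ` are again projections of points of `H`, now with first coordinate in
the compact set `S - S`. A discrete subgroup is closed, so it meets the compact set
`(S - S) × K₀`, for a compact neighbourhood `K₀` of `0`, in finitely many points. Hence only
finitely many nonzero differences lie in `K₀`, and removing them from its interior leaves a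
neighbourhood of `0` that contains no nonzero difference.
-/

open Filter Topology
open scoped Pointwise

def IsUniformlyDiscrete {G : Type*} [Sub G] [Zero G] [TopologicalSpace G] (Λ : Set G) : Prop :=
  ∃ U : Set G, IsOpen U ∧ (0 : G) ∈ U ∧ ∀ x ∈ Λ, ∀ y ∈ Λ, x ≠ y → x - y ∉ U

theorem isUniformlyDiscrete_of_finite_sub_inter {G : Type*} [AddGroup G] [TopologicalSpace G]
    [T1Space G] {Λ N : Set G} (hN : N ∈ 𝓝 0) (hfin : ((Λ - Λ) ∩ N).Finite) :
    IsUniformlyDiscrete Λ := by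
  refine ⟨interior N \ (((Λ - Λ) ∩ N) \ {0}), isOpen_interior.sdiff hfin.sdiff.isClosed,
    ⟨mem_interior_iff_mem_nhds.mpr hN, fun h ↦ h.2 rfl⟩, ?_⟩
  rintro x hx y hy hne ⟨hxyN, hxy⟩
  exact hxy ⟨⟨Set.sub_mem_sub hx hy, interior_subset hxyN⟩, sub_ne_zero.mpr hne⟩

theorem IsCompact.sub {A : Type*} [AddGroup A] [TopologicalSpace A] [IsTopologicalAddGroup A]
    {s t : Set A} (hs : IsCompact s) (ht : IsCompact t) : IsCompact (s - t) := by
  rw [sub_eq_add_neg]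
  exact hs.add ht.neg

theorem AddSubgroup.finite_inter_of_isCompact {A : Type*} [AddGroup A] [TopologicalSpace A]
    [IsTopologicalAddGroup A] [T2Space A] (H : AddSubgroup A) [DiscreteTopology H]
    {C : Set A} (hC : IsCompact C) : ((H : Set A) ∩ C).Finite :=
  (hC.inter_left AddSubgroup.isClosed_of_discrete).finite
    ((isDiscrete_iff_discreteTopology.mpr ‹_›).mono Set.inter_subset_left)

section CutAndProject

variable {E G : Type*} [AddGroup E] [AddGroup G]

def cutProjectSet (H : AddSubgroup (E × G)) (S : Set E) : Set G :=
  {g | ∃ h ∈ H, h.1 ∈ S ∧ h.2 = g}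

theorem cutProjectSet_sub_subset (H : AddSubgroup (E × G)) (S : Set E) :
    cutProjectSet H S - cutProjectSet H S ⊆ cutProjectSet H (S - S) := by
  rintro _ ⟨_, ⟨h, hH, hS, rfl⟩, _, ⟨h', hH', hS', rfl⟩, rfl⟩
  exact ⟨h - h', H.sub_mem hH hH', Set.sub_mem_sub hS hS', rfl⟩

variable [TopologicalSpace E] [IsTopologicalAddGroup E] [T2Space E]
  [TopologicalSpace G] [IsTopologicalAddGroup G] [T2Space G]

theorem finite_cutProjectSet_inter (H : AddSubgroup (E × G)) [DiscreteTopology H] {S : Set E}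
    (hS : IsCompact S) {K : Set G} (hK : IsCompact K) : (cutProjectSet H S ∩ K).Finite := by
  refine ((H.finite_inter_of_isCompact (hS.prod hK)).image Prod.snd).subset ?_
  rintro _ ⟨⟨h, hH, hS, rfl⟩, hK⟩
  exact ⟨h, ⟨hH, hS, hK⟩, rfl⟩

theorem isUniformlyDiscrete_cutProjectSet [LocallyCompactSpace G] (H : AddSubgroup (E × G))
    [DiscreteTopology H] {S : Set E} (hS : IsCompact S) :
    IsUniformlyDiscrete (cutProjectSet H S) := by
  obtain ⟨K, hK, hK0⟩ := exists_compact_mem_nhds (0 : G)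
  exact isUniformlyDiscrete_of_finite_sub_inter hK0
    ((finite_cutProjectSet_inter H (hS.sub hS) hK).subset
      (Set.inter_subset_inter_left K (cutProjectSet_sub_subset H S)))

end CutAndProject

theorem quasicrystal_uniformly_discrete_general
    {G : Type*} [AddCommGroup G] [TopologicalSpace G] [IsTopologicalAddGroup G]
    [LocallyCompactSpace G] [T2Space G]
    (m : ℕ) (H : AddSubgroup ((Fin m → ℝ) × G)) [DiscreteTopology H]
    (S : Set (Fin m → ℝ)) (hS : IsCompact S) :
    ∃ U : Set G, IsOpen U ∧ (0 : G) ∈ U ∧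
      ∀ x ∈ {g : G | ∃ h ∈ H, h.1 ∈ S ∧ h.2 = g},
        ∀ y ∈ {g : G | ∃ h ∈ H, h.1 ∈ S ∧ h.2 = g},
          x ≠ y → x - y ∉ U :=
  isUniformlyDiscrete_cutProjectSet H hS

/-- If `H` is a discrete subgroup of `ℝ^m × G` on which the second projection is
injective, and `S ⊆ ℝ^m`, `K ⊆ G` are compact, then
`Λ = {p₂ h : h ∈ H, p₁ h ∈ S}` is uniformly discrete in `G`. -/
theorem quasicrystal_uniformly_discrete
    {G : Type*} [AddCommGroup G] [TopologicalSpace G] [IsTopologicalAddGroup G]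
    [LocallyCompactSpace G] [T2Space G]
    (m : ℕ) (H : AddSubgroup ((Fin m → ℝ) × G)) [DiscreteTopology H]
    (hinj : Set.InjOn (fun x : (Fin m → ℝ) × G => x.2) (H : Set ((Fin m → ℝ) × G)))
    (S : Set (Fin m → ℝ)) (hS : IsCompact S) (K : Set G) (hK : IsCompact K) :
    ∃ U : Set G, IsOpen U ∧ (0 : G) ∈ U ∧
      ∀ x ∈ {g : G | ∃ h ∈ H, h.1 ∈ S ∧ h.2 = g},
        ∀ y ∈ {g : G | ∃ h ∈ H, h.1 ∈ S ∧ h.2 = g},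
          x ≠ y → x - y ∉ U :=
  quasicrystal_uniformly_discrete_general m H S hS
end

section
/- Let G be an LCA group, H a lattice (discrete cocompact subgroup) of ℝ^m × G, and let G̃ be a closed subgroup of G of the form ℝ^d × 𝕋^ℓ × D̃ where D̃ is a subgroup of the discrete part D of G = ℝ^d × 𝕋^ℓ × D. Then H̃ = {(x,g) ∈ H : g ∈ G̃} is a lattice in ℝ^m × G̃. -/
/-!
`ℝ^m × G̃` is an open subgroup `Y` of `X = ℝ^m × G`, because `D` is discrete. For an open
subgroup `Y` the natural map `Y ⧸ (H ∩ Y) → X ⧸ H` is an open embedding onto an open, hence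
closed, hence compact subgroup of the compact group `X ⧸ H`; so `Y ⧸ (H ∩ Y)` is compact.
Discreteness of `H ∩ Y` is inherited from `H`.
-/

namespace AddSubgroup

variable {X : Type*} [AddCommGroup X] (H Y : AddSubgroup X)

def quotientComapSubtypeMap : Y ⧸ H.comap Y.subtype →+ X ⧸ H :=
  QuotientAddGroup.map _ H Y.subtype le_rfl

theorem quotientComapSubtypeMap_comp_mk :
    quotientComapSubtypeMap H Y ∘ ((↑) : Y → Y ⧸ H.comap Y.subtype) =
      ((↑) : X → X ⧸ H) ∘ Subtype.val :=
  rfl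

theorem quotientComapSubtypeMap_injective : Function.Injective (quotientComapSubtypeMap H Y) := by
  rw [← AddMonoidHom.ker_eq_bot_iff, quotientComapSubtypeMap, QuotientAddGroup.ker_map,
    AddSubgroup.map_eq_bot_iff, QuotientAddGroup.ker_mk']

variable [TopologicalSpace X]

theorem discreteTopology_comap_subtype [DiscreteTopology H] :
    DiscreteTopology (H.comap Y.subtype) := by
  have hval : Topology.IsEmbedding (fun k : H.comap Y.subtype => ((k : Y) : X)) :=
    Topology.IsEmbedding.subtypeVal.comp Topology.IsEmbedding.subtypeVal
  have hinto : Topology.IsEmbedding (fun k : H.comap Y.subtype => (⟨(k : Y), k.2⟩ : H)) :=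
    .of_comp (continuous_induced_rng.mpr hval.continuous) continuous_subtype_val hval
  exact hinto.discreteTopology

theorem continuous_quotientComapSubtypeMap : Continuous (quotientComapSubtypeMap H Y) := by
  rw [(QuotientAddGroup.isQuotientMap_mk _).continuous_iff, quotientComapSubtypeMap_comp_mk]
  fun_prop

theorem isOpenMap_quotientComapSubtypeMap [SeparatelyContinuousAdd X]
    (hY : IsOpen (Y : Set X)) : IsOpenMap (quotientComapSubtypeMap H Y) := by
  refine .of_comp QuotientAddGroup.continuous_mk QuotientAddGroup.mk_surjective ?_
  rw [quotientComapSubtypeMap_comp_mk]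
  exact QuotientAddGroup.isOpenMap_coe.comp hY.isOpenMap_subtype_val

theorem isOpenEmbedding_quotientComapSubtypeMap [SeparatelyContinuousAdd X]
    (hY : IsOpen (Y : Set X)) : Topology.IsOpenEmbedding (quotientComapSubtypeMap H Y) :=
  .of_continuous_injective_isOpenMap (continuous_quotientComapSubtypeMap H Y)
    (quotientComapSubtypeMap_injective H Y) (isOpenMap_quotientComapSubtypeMap H Y hY)

theorem compactSpace_quotient_comap_subtype [IsTopologicalAddGroup X] [CompactSpace (X ⧸ H)]
    (hY : IsOpen (Y : Set X)) : CompactSpace (Y ⧸ H.comap Y.subtype) := by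
  have hφ := isOpenEmbedding_quotientComapSubtypeMap H Y hY
  have hclosed : IsClosed (Set.range (quotientComapSubtypeMap H Y)) := by
    simpa only [AddMonoidHom.coe_range] using
      AddSubgroup.isClosed_of_isOpen (quotientComapSubtypeMap H Y).range hφ.isOpen_range
  refine ⟨?_⟩
  rw [hφ.isCompact_iff, Set.image_univ]
  exact hclosed.isCompact

end AddSubgroup

theorem lattice_restrict_to_subgroup_general
    {D : Type*} [AddCommGroup D] [TopologicalSpace D] [DiscreteTopology D]
    (m d ℓ : ℕ) (Dt : AddSubgroup D)
    -- the ambient group `X = ℝ^m × (ℝ^d × 𝕋^ℓ × D)`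
    (H : AddSubgroup ((Fin m → ℝ) × ((Fin d → ℝ) × (Fin ℓ → AddCircle (1 : ℝ)) × D)))
    [DiscreteTopology H]
    (hcocompact : CompactSpace
      (((Fin m → ℝ) × ((Fin d → ℝ) × (Fin ℓ → AddCircle (1 : ℝ)) × D)) ⧸ H))
    -- `Y` is the closed subgroup `ℝ^m × G̃` of `X`
    (Y : AddSubgroup ((Fin m → ℝ) × ((Fin d → ℝ) × (Fin ℓ → AddCircle (1 : ℝ)) × D)))
    (hY : (Y : Set ((Fin m → ℝ) × ((Fin d → ℝ) × (Fin ℓ → AddCircle (1 : ℝ)) × D))) = {x | x.2.2.2 ∈ Dt}) :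
    DiscreteTopology (H.comap Y.subtype) ∧
      CompactSpace (Y ⧸ H.comap Y.subtype) := by
  have hYopen : IsOpen (Y : Set ((Fin m → ℝ) × ((Fin d → ℝ) × (Fin ℓ → AddCircle (1 : ℝ)) × D))) := by
    rw [hY]
    exact (isOpen_discrete (Dt : Set D)).preimage continuous_snd.snd.snd
  exact ⟨H.discreteTopology_comap_subtype Y, H.compactSpace_quotient_comap_subtype Y hYopen⟩

/-- If `H` is a lattice in `ℝ^m × G` with `G = ℝ^d × 𝕋^ℓ × D` (`D` countable
discrete), and `G̃ = ℝ^d × 𝕋^ℓ × D̃` for a subgroup `D̃ ≤ D`, then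
`H̃ = {(x,g) ∈ H : g ∈ G̃}` is a lattice in `ℝ^m × G̃`. -/
theorem lattice_restrict_to_subgroup
    {D : Type*} [AddCommGroup D] [TopologicalSpace D] [DiscreteTopology D] [Countable D]
    (m d ℓ : ℕ) (Dt : AddSubgroup D)
    -- the ambient group `X = ℝ^m × (ℝ^d × 𝕋^ℓ × D)`
    (H : AddSubgroup ((Fin m → ℝ) × ((Fin d → ℝ) × (Fin ℓ → AddCircle (1 : ℝ)) × D)))
    [DiscreteTopology H]
    (hcocompact : CompactSpace
      (((Fin m → ℝ) × ((Fin d → ℝ) × (Fin ℓ → AddCircle (1 : ℝ)) × D)) ⧸ H))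
    -- `Y` is the closed subgroup `ℝ^m × G̃` of `X`
    (Y : AddSubgroup ((Fin m → ℝ) × ((Fin d → ℝ) × (Fin ℓ → AddCircle (1 : ℝ)) × D)))
    (hY : (Y : Set ((Fin m → ℝ) × ((Fin d → ℝ) × (Fin ℓ → AddCircle (1 : ℝ)) × D))) = {x | x.2.2.2 ∈ Dt}) :
    DiscreteTopology (H.comap Y.subtype) ∧
      CompactSpace (Y ⧸ H.comap Y.subtype) :=
  lattice_restrict_to_subgroup_general m d ℓ Dt H hcocompact Y hY
end

section
/- Let m, d ∈ ℕ and p a prime. For the group G = ℝ^d × 𝕋^ℓ × (ℤ/pℤ)^{m+d+1}, there is no lattice H in ℝ^m × G such that simultaneously: the projection p₁ : H → ℝ^m is injective with dense image, and the projection p₂ : H → G is injective with dense image. -/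
noncomputable instance (p : ℕ) : TopologicalSpace (ZMod p) := ⊥

instance (p : ℕ) : DiscreteTopology (ZMod p) := ⟨rfl⟩

/-- The ambient group `ℝ^m × (ℝ^d × 𝕋^ℓ × (ℤ/pℤ)^{m+d+1})`. -/
abbrev CPSpace (m d ℓ p : ℕ) :=
  (Fin m → ℝ) × ((Fin d → ℝ) × (Fin ℓ → AddCircle (1 : ℝ)) × (Fin (m + d + 1) → ZMod p))

/-!
Since `𝕋^ℓ × (ℤ/pℤ)^{m+d+1}` is compact, the projection `ℝ^m × G → ℝ^m × ℝ^d` is a proper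
map; it is injective on `H` because `p₁` is, so it carries the discrete subgroup `H`
isomorphically onto a discrete subgroup of `ℝ^{m+d}`, and `H ≅ ℤ^r` with `r ≤ m + d`.
On the other hand `(ℤ/pℤ)^{m+d+1}` is a discrete factor of `G`, so density of `p₂(H)` forces
`H` to surject onto it, which needs at least `m + d + 1` generators.
-/

open Module Function Set

theorem IsDiscrete.image_of_isProperMap {X Y : Type*} [TopologicalSpace X] [TopologicalSpace Y]
    [T1Space Y] [WeaklyLocallyCompactSpace Y] {f : X → Y} {s : Set X} (hs : IsDiscrete s)
    (hs_closed : IsClosed s) (hf : IsProperMap f) : IsDiscrete (f '' s) := by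
  have hs_fin :=
    tendsto_cofinite_cocompact_iff.mp (hs_closed.tendsto_coe_cofinite_of_isDiscrete hs)
  refine ⟨continuous_subtype_val.discrete_of_tendsto_cofinite_cocompact ?_⟩
  refine tendsto_cofinite_cocompact_iff.mpr fun K hK ↦ ?_
  refine ((hs_fin _ (hf.isCompact_preimage hK)).image
    (fun x ↦ ⟨f x, mem_image_of_mem f x.2⟩)).subset ?_
  rintro ⟨_, x, hx, rfl⟩ hxK
  exact ⟨⟨x, hx⟩, hxK, rfl⟩

theorem Submodule.finrank_int_le_of_discreteTopology {E : Type*} [NormedAddCommGroup E]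
    [NormedSpace ℝ E] [FiniteDimensional ℝ E] (L : Submodule ℤ E) [DiscreteTopology L] :
    finrank ℤ L ≤ finrank ℝ E := by
  have h := Real.finrank_eq_int_finrank_of_discrete (s := (L : Set E)) (by rwa [span_eq])
  rw [Set.finrank, Set.finrank, span_eq] at h
  exact h ▸ Submodule.finrank_le _

theorem Module.finrank_le_finrank_int_of_surjective {M K V : Type*} [AddCommGroup M]
    [Module.Free ℤ M] [Module.Finite ℤ M] [DivisionRing K] [AddCommGroup V] [Module K V]
    (f : M →+ V) (hf : Surjective f) : finrank K V ≤ finrank ℤ M := by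
  let b := Module.Free.chooseBasis ℤ M
  have hspan_int : Submodule.span ℤ (range (f.toIntLinearMap ∘ b)) = ⊤ := by
    rw [range_comp, ← Submodule.map_span, b.span_eq, Submodule.map_top,
      LinearMap.range_eq_top.mpr hf]
  have hspan : Submodule.span K (range (f ∘ b)) = ⊤ :=
    Submodule.eq_top_iff'.mpr fun x ↦
      Submodule.span_le_restrictScalars ℤ K _ (hspan_int ▸ Submodule.mem_top)
  calc finrank K V = finrank K (Submodule.span K (range (f ∘ b))) := by rw [hspan, finrank_top]
    _ ≤ Fintype.card _ := finrank_range_le_card _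
    _ = finrank ℤ M := (finrank_eq_card_chooseBasisIndex ℤ M).symm

theorem AddSubgroup.finrank_le_of_surjective_of_isProperMap {X E K V : Type*} [AddCommGroup X]
    [TopologicalSpace X] [IsTopologicalAddGroup X] [T2Space X] [NormedAddCommGroup E]
    [NormedSpace ℝ E] [FiniteDimensional ℝ E] [DivisionRing K] [AddCommGroup V] [Module K V]
    {f : X →+ E} (hf : IsProperMap f) (H : AddSubgroup X) [DiscreteTopology H]
    (hf_inj : InjOn f H) {g : H →+ V} (hg : Surjective g) : finrank K V ≤ finrank ℝ E := by
  let L := (H.map f).toIntSubmodule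
  have : DiscreteTopology L :=
    ((SetLike.isDiscrete_iff_discreteTopology.mpr ‹_›).image_of_isProperMap
      H.isClosed_of_discrete hf).to_subtype
  let e : H ≃+ H.map f := AddEquiv.ofBijective (f.addSubgroupMap H)
    ⟨fun x y hxy ↦ Subtype.ext (hf_inj x.2 y.2 congr(Subtype.val $hxy)),
      f.addSubgroupMap_surjective H⟩
  calc finrank K V ≤ finrank ℤ L :=
        finrank_le_finrank_int_of_surjective (g.comp e.symm.toAddMonoidHom)
          (hg.comp e.symm.surjective)
    _ ≤ finrank ℝ E := L.finrank_int_le_of_discreteTopology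

theorem Dense.image_eq_univ_of_discreteTopology {X D : Type*} [TopologicalSpace X]
    [TopologicalSpace D] [DiscreteTopology D] {f : X → D} (hf : Continuous f)
    (hf_surj : Surjective f) {s : Set X} (hs : Dense s) : f '' s = univ :=
  dense_discrete.mp (hf_surj.denseRange.dense_image hf hs)

/-- For `G = ℝ^d × 𝕋^ℓ × (ℤ/pℤ)^{m+d+1}` there is no lattice `H` in `ℝ^m × G`
making `(ℝ^m, G, H)` a complete cut-and-project scheme: one cannot have both
projections injective on `H` with dense images. -/
theorem no_complete_cut_and_project_scheme (m d ℓ : ℕ) (p : ℕ) (hp : p.Prime) :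
    ¬ ∃ H : AddSubgroup (CPSpace m d ℓ p),
      DiscreteTopology H ∧
      CompactSpace (CPSpace m d ℓ p ⧸ H) ∧
      Set.InjOn Prod.fst (H : Set (CPSpace m d ℓ p)) ∧
      Dense (Prod.fst '' (H : Set (CPSpace m d ℓ p))) ∧
      Set.InjOn Prod.snd (H : Set (CPSpace m d ℓ p)) ∧
      Dense (Prod.snd '' (H : Set (CPSpace m d ℓ p))) := by
  have := Fact.mk hp
  rintro ⟨H, _, -, hinj₁, -, -, hdense₂⟩
  let φ : CPSpace m d ℓ p →+ (Fin m → ℝ) × (Fin d → ℝ) :=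
    (AddMonoidHom.id _).prodMap (AddMonoidHom.fst _ _)
  have hφ : IsProperMap φ := isProperMap_id.prodMap isProperMap_fst_of_compactSpace
  let π : H →+ (Fin (m + d + 1) → ZMod p) :=
    ((AddMonoidHom.snd _ _).comp (AddMonoidHom.snd _ _)).comp
      ((AddMonoidHom.snd _ _).comp H.subtype)
  have hπ : Surjective π := by
    intro z
    obtain ⟨_, ⟨h, hh, rfl⟩, rfl⟩ :
        z ∈ (Prod.snd ∘ Prod.snd) '' (Prod.snd '' (H : Set (CPSpace m d ℓ p))) :=
      (Dense.image_eq_univ_of_discreteTopology continuous_snd.snd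
        (fun z ↦ ⟨(0, 0, z), rfl⟩) hdense₂).symm ▸ mem_univ z
    exact ⟨⟨h, hh⟩, rfl⟩
  have hrank := H.finrank_le_of_surjective_of_isProperMap (K := ZMod p) hφ
    (fun x hx y hy hxy ↦ hinj₁ hx hy congr(Prod.fst $hxy)) hπ
  simp only [finrank_fin_fun, finrank_prod] at hrank
  omega
end

section
/- Let G be an LCA group with Haar measure μ, Ω ⊆ G compact, and ε > 0. Then there exists a compact set Ω′ ⊇ Ω with μ(∂Ω′) = 0 and μ(Ω′ ∖ Ω) ≤ ε. -/
/-!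
Choose an open `U ⊇ Ω` with `μ (U \ Ω) ≤ ε` and a Urysohn function `f` equal to `1` on `Ω` and
`0` off `U`, with compact support. The level sets of `f` are disjoint, so all but countably many
of them are null; for such a level `t ∈ (0, 1)` the superlevel set `{t ≤ f}` is a compact set
between `Ω` and `U` whose frontier lies in the null set `{f = t}`. Outer regularity is only
available for the regular Haar measure, but any Haar measure is a multiple of it on sets with
compact closure.
-/

open MeasureTheory Set

section

variable {X : Type*} [MeasurableSpace X]

theorem MeasureTheory.Measure.exists_mem_Ioo_measure_preimage_singleton_eq_zero
    (μ : Measure X) [SFinite μ] {f : X → ℝ} (hf : Measurable f) {a b : ℝ} (hab : a < b) :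
    ∃ t ∈ Ioo a b, μ (f ⁻¹' {t}) = 0 := by
  obtain ⟨t, ht, hat, htb⟩ :=
    ((Measure.countable_meas_level_set_pos (μ := μ) hf).dense_compl ℝ).exists_between hab
  exact ⟨t, ⟨hat, htb⟩, nonpos_iff_eq_zero.mp (not_lt.mp ht)⟩

variable [TopologicalSpace X] [OpensMeasurableSpace X] [LocallyCompactSpace X]

theorem IsCompact.exists_isCompact_between_measure_frontier_eq_zero [RegularSpace X]
    (μ : Measure X) [IsFiniteMeasureOnCompacts μ] {K U : Set X} (hK : IsCompact K)
    (hU : IsOpen U) (hKU : K ⊆ U) :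
    ∃ K', IsCompact K' ∧ K ⊆ K' ∧ K' ⊆ U ∧ μ (frontier K') = 0 := by
  obtain ⟨f, hfK, hfU, hf_supp, -⟩ := exists_continuous_one_zero_of_isCompact hK
    hU.isClosed_compl (disjoint_compl_right_iff_subset.mpr hKU)
  -- `μ` need not be s-finite, so the level sets are measured inside the compact support.
  have : IsFiniteMeasure (μ.restrict (tsupport f)) :=
    isFiniteMeasure_restrict.mpr hf_supp.measure_lt_top.ne
  obtain ⟨t, ⟨ht0, ht1⟩, ht⟩ := Measure.exists_mem_Ioo_measure_preimage_singleton_eq_zero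
    (μ.restrict (tsupport f)) f.continuous.measurable zero_lt_one
  rw [Measure.restrict_apply (isClosed_singleton.preimage f.continuous).measurableSet] at ht
  have h_closed : IsClosed {x | t ≤ f x} := isClosed_le continuous_const f.continuous
  have h_supp : {x | t ≤ f x} ⊆ tsupport f := fun x hx =>
    subset_tsupport f (ht0.trans_le hx).ne'
  have h_frontier : frontier {x | t ≤ f x} ⊆ f ⁻¹' {t} ∩ tsupport f := fun x hx =>
    ⟨(frontier_le_subset_eq continuous_const f.continuous hx).symm,
      h_supp (h_closed.frontier_subset hx)⟩
  refine ⟨{x | t ≤ f x}, hf_supp.of_isClosed_subset h_closed h_supp, fun x hx => ?_,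
    fun x hx => ?_, measure_mono_null h_frontier ht⟩
  · simp [hfK hx, ht1.le]
  · by_contra hxU
    exact (ht0.trans_le hx).ne' (hfU hxU)

theorem IsCompact.exists_isCompact_superset_measure_frontier_eq_zero_measure_sdiff_le
    [T2Space X] (μ : Measure X) [IsFiniteMeasureOnCompacts μ] [μ.OuterRegular] {K : Set X}
    (hK : IsCompact K) {ε : ENNReal} (hε : ε ≠ 0) :
    ∃ K', IsCompact K' ∧ K ⊆ K' ∧ μ (frontier K') = 0 ∧ μ (K' \ K) ≤ ε := by
  obtain ⟨U, hKU, hU, -, hμU⟩ :=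
    hK.measurableSet.exists_isOpen_sdiff_lt (hK.measure_lt_top (μ := μ)).ne hε
  obtain ⟨K', hK', hKK', hK'U, hfr⟩ :=
    hK.exists_isCompact_between_measure_frontier_eq_zero μ hU hKU
  refine ⟨K', hK', hKK', hfr, ?_⟩
  calc μ (K' \ K) ≤ μ (U \ K) := measure_mono (sdiff_subset_sdiff_left hK'U)
    _ ≤ ε := hμU.le

end

/-- Every compact set in an LCA group with Haar measure admits a Riemann
integrable compact enlargement of arbitrarily small excess measure. -/
theorem exists_riemann_integrable_enlargement
    {G : Type*} [AddCommGroup G] [TopologicalSpace G] [IsTopologicalAddGroup G]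
    [LocallyCompactSpace G] [T2Space G]
    [MeasurableSpace G] [BorelSpace G]
    (μ : Measure G) [μ.IsAddHaarMeasure]
    (Ω : Set G) (hΩ : IsCompact Ω) (ε : ℝ) (hε : 0 < ε) :
    ∃ Ω' : Set G, IsCompact Ω' ∧ Ω ⊆ Ω' ∧ μ (frontier Ω') = 0 ∧
      μ (Ω' \ Ω) ≤ ENNReal.ofReal ε := by
  set ν := Measure.addHaarScalarFactor μ Measure.addHaar • (Measure.addHaar : Measure G)
  obtain ⟨Ω', hΩ', hΩΩ', hfr, hdiff⟩ :=
    hΩ.exists_isCompact_superset_measure_frontier_eq_zero_measure_sdiff_le ν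
      (ENNReal.ofReal_pos.mpr hε).ne'
  have hμν : ∀ s ⊆ Ω', μ s = ν s := fun s hs =>
    Measure.measure_isAddInvariant_eq_smul_of_isCompact_closure μ _ (hΩ'.closure_of_subset hs)
  exact ⟨Ω', hΩ', hΩΩ', (hμν _ hΩ'.isClosed.frontier_subset).trans hfr,
    (hμν _ sdiff_subset).trans_le hdiff⟩
end

section
/- Every countable abelian group that, for every prime p, contains no subgroup isomorphic to (ℤ/pℤ)^{n+1}, embeds into a group of the form ℚ^{k} ⊕ ⨁_p ℤ(p^∞)^{k_p} with all k_p ≤ n. -/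
/-- The Prüfer `p`-group, realized as the `p`-primary component of `ℚ/ℤ`. -/
noncomputable def Prufer (p : Nat.Primes) : AddSubgroup (AddCircle (1 : ℚ)) :=
  letI : Fact (p : ℕ).Prime := ⟨p.2⟩
  AddCommGroup.primaryComponent (AddCircle (1 : ℚ)) p

/-!
The torsion-free part is handled by `A → ℚ ⊗[ℤ] A`: its kernel is the torsion subgroup and its
target is a countable `ℚ`-vector space, hence embeds in `ℚ^(ℕ)`. For the torsion part, the
hypothesis says that each `p`-socle `A[p]` is an `𝔽_p`-vector space of dimension `k_p ≤ n`, so it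
embeds in `ℤ(p^∞)^{k_p}`; this group is divisible, so the embedding extends to
`π_p : A → ℤ(p^∞)^{k_p}`. A torsion element is killed by `π_p` unless `p` divides its order, so on
the torsion subgroup the `π_p` assemble to a map into the direct sum, which is divisible and again
extends to `A`. An element killed by both maps is torsion and has no multiple of prime order,
hence is zero.
-/

open Function

noncomputable instance DirectSum.divisibleByInt {ι : Type*} {β : ι → Type*}
    [∀ i, AddCommGroup (β i)] [∀ i, DivisibleBy (β i) ℤ] : DivisibleBy (DirectSum ι β) ℤ :=
  divisibleByOfSMulRightSurj _ _ fun {m} hm x => by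
    classical
    induction x using DirectSum.induction_on with
    | zero => exact ⟨0, smul_zero m⟩
    | of i b =>
      exact ⟨DirectSum.of β i (DivisibleBy.div b m), by
        simp only [← map_zsmul, DivisibleBy.div_cancel b hm]⟩
    | add x y hx hy =>
      obtain ⟨x', rfl⟩ := hx
      obtain ⟨y', rfl⟩ := hy
      exact ⟨x' + y', smul_add m x' y'⟩

namespace AddCommGroup

variable {G : Type*} [AddCommGroup G] {p : ℕ}

theorem primaryComponent.eq_zero_of_nsmul_eq_zero (hp : p.Prime) {x : primaryComponent G p}
    {m : ℕ} (hx : m • x = 0) (hpm : ¬ p ∣ m) : x = 0 := by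
  obtain ⟨k, hk⟩ := mem_primaryComponent.mp x.2
  have hcop : Nat.Coprime (p ^ k) m := (hp.coprime_iff_not_dvd.mpr hpm).pow_left k
  rw [← AddMonoid.addOrderOf_eq_one_iff]
  exact Nat.eq_one_of_dvd_coprimes hcop
    (addOrderOf_dvd_of_nsmul_eq_zero (Subtype.ext hk)) (addOrderOf_dvd_of_nsmul_eq_zero hx)

theorem primaryComponent.surjective_nsmul [DivisibleBy G ℕ] (hp : p.Prime) {m : ℕ}
    (hm : m ≠ 0) : Surjective fun x : primaryComponent G p => m • x := by
  intro z
  -- Divide by `p ^ e` in `G` (the quotient is still `p`-primary), then by `m'`, which is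
  -- invertible modulo the order of that quotient.
  obtain ⟨e, m', hpm', rfl⟩ := Nat.exists_eq_pow_mul_and_not_dvd hm p hp.ne_one
  obtain ⟨k, hk⟩ := mem_primaryComponent.mp z.2
  obtain ⟨u, hu⟩ := DivisibleBy.surjective_smul G ℕ (pow_ne_zero e hp.ne_zero) (z : G)
  have hu0 : p ^ (e + k) • u = 0 := by
    dsimp only at hu
    rw [pow_add, mul_nsmul, hu, hk]
  have hcop : m'.Coprime (addOrderOf u) :=
    ((hp.coprime_iff_not_dvd.mpr hpm').pow_left (e + k)).symm.coprime_dvd_right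
      (addOrderOf_dvd_of_nsmul_eq_zero hu0)
  obtain ⟨c, hc⟩ := exists_nsmul_eq_self_of_coprime hcop
  refine ⟨⟨c • u, nsmul_mem (mem_primaryComponent.mpr ⟨_, hu0⟩) c⟩, Subtype.ext ?_⟩
  dsimp only at hu ⊢
  rw [AddSubgroup.coe_nsmul, mul_nsmul', smul_comm m' c u, hc, hu]

noncomputable instance primaryComponent.divisibleByInt [DivisibleBy G ℤ] [Fact p.Prime] :
    DivisibleBy (primaryComponent G p) ℤ :=
  letI := AddGroup.divisibleByNatOfDivisibleByInt G
  letI := divisibleByOfSMulRightSurj (primaryComponent G p) ℕ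
    (primaryComponent.surjective_nsmul Fact.out)
  AddGroup.divisibleByIntOfDivisibleByNat _

end AddCommGroup

theorem IsOfFinAddOrder.eq_zero_of_forall_prime {G : Type*} [AddMonoid G] {a : G}
    (ha : IsOfFinAddOrder a) (h : ∀ p : ℕ, p.Prime → ∀ m : ℕ, p • m • a = 0 → m • a = 0) :
    a = 0 := by
  by_contra ha0
  set m := addOrderOf a
  have hq : m.minFac.Prime := Nat.minFac_prime (by rwa [Ne, AddMonoid.addOrderOf_eq_one_iff])
  have hm : 0 < m := ha.addOrderOf_pos
  have h0 : (m / m.minFac) • a = 0 := h _ hq _ (by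
    rw [← mul_nsmul', Nat.mul_div_cancel' (Nat.minFac_dvd m), addOrderOf_nsmul_eq_zero])
  exact (Nat.div_lt_self hm hq.one_lt).not_ge (Nat.le_of_dvd
    (Nat.div_pos (Nat.minFac_le hm) (Nat.minFac_pos m)) (addOrderOf_dvd_of_nsmul_eq_zero h0))

theorem exists_injective_zmod_of_addOrderOf_eq {G : Type*} [AddGroup G] {x : G} {n : ℕ}
    (hx : addOrderOf x = n) : ∃ f : ZMod n →+ G, Injective f := by
  subst hx
  refine ⟨ZMod.lift _ ⟨zmultiplesHom G x, by simp [addOrderOf_nsmul_eq_zero]⟩, ?_⟩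
  rw [injective_iff_map_eq_zero]
  intro k hk
  obtain ⟨k, rfl⟩ := ZMod.intCast_surjective k
  rw [ZMod.lift_coe, zmultiplesHom_apply] at hk
  exact (ZMod.intCast_zmod_eq_zero_iff_dvd _ _).mpr (addOrderOf_dvd_iff_zsmul_eq_zero.mpr hk)

namespace Prufer

variable (p : Nat.Primes)

noncomputable instance : DivisibleBy (Prufer p) ℤ :=
  haveI : Fact (p : ℕ).Prime := ⟨p.2⟩
  AddCommGroup.primaryComponent.divisibleByInt

theorem eq_zero_of_nsmul_eq_zero {x : Prufer p} {m : ℕ} (hx : m • x = 0) (hpm : ¬ (p : ℕ) ∣ m) :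
    x = 0 :=
  AddCommGroup.primaryComponent.eq_zero_of_nsmul_eq_zero p.2 hx hpm

theorem exists_injective_zmod : ∃ η : ZMod p →+ Prufer p, Injective η := by
  have : Fact ((0 : ℚ) < 1) := ⟨one_pos⟩
  let x : AddCircle (1 : ℚ) := ((1 / p : ℚ) : AddCircle (1 : ℚ))
  have hx : addOrderOf x = p := AddCircle.addOrderOf_period_div p.2.pos
  have hmem : x ∈ Prufer p := AddCommGroup.mem_primaryComponent.mpr ⟨1, by
    rw [pow_one, ← hx, addOrderOf_nsmul_eq_zero]⟩
  exact exists_injective_zmod_of_addOrderOf_eq (x := (⟨x, hmem⟩ : Prufer p))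
    ((AddSubgroup.addOrderOf_mk x hmem).trans hx)

end Prufer

theorem exists_injective_pi_of_not_exists_injective {K V : Type*} [Field K] [AddCommGroup V]
    [Module K V] {n : ℕ} (h : ¬ ∃ f : (Fin (n + 1) → K) →ₗ[K] V, Injective f) :
    ∃ k ≤ n, ∃ g : V →ₗ[K] (Fin k → K), Injective g := by
  have hrank : Module.rank K V < (n + 1 : ℕ) := by
    by_contra! hle
    obtain ⟨v, hv⟩ := exists_linearIndependent_of_le_rank hle
    exact h ⟨Fintype.linearCombination K v, hv.fintypeLinearCombination_injective⟩
  have : Module.Finite K V :=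
    Module.rank_lt_aleph0_iff.mp (hrank.trans Cardinal.natCast_lt_aleph0)
  refine ⟨Module.finrank K V, Nat.lt_succ_iff.mp ?_, (Module.finBasis K V).equivFun.toLinearMap,
    (Module.finBasis K V).equivFun.injective⟩
  exact_mod_cast (Module.finrank_eq_rank K V).symm ▸ hrank

open AddSubgroup in
theorem exists_injective_torsionBy_prime {A : Type*} [AddCommGroup A] {n p : ℕ} [Fact p.Prime]
    (hA : ¬ ∃ f : (Fin (n + 1) → ZMod p) →+ A, Injective f) :
    ∃ k ≤ n, ∃ g : torsionBy A p →+ (Fin k → ZMod p), Injective g := by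
  let _ := torsionBy.zmodModule (A := A) (n := p)
  obtain ⟨k, hk, g, hg⟩ := exists_injective_pi_of_not_exists_injective (K := ZMod p)
    (V := torsionBy A p) fun ⟨f, hf⟩ =>
      hA ⟨(torsionBy A p).subtype.comp f.toAddMonoidHom, Subtype.val_injective.comp hf⟩
  exact ⟨k, hk, g.toAddMonoidHom, hg⟩

open AddSubgroup in
theorem exists_prufer_pi_injective_on_torsionBy {A : Type*} [AddCommGroup A] {n : ℕ}
    (p : Nat.Primes) (hA : ¬ ∃ f : (Fin (n + 1) → ZMod p) →+ A, Injective f) :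
    ∃ k ≤ n, ∃ π : A →+ (Fin k → Prufer p), ∀ a, (p : ℕ) • a = 0 → π a = 0 → a = 0 := by
  have : Fact (p : ℕ).Prime := ⟨p.2⟩
  obtain ⟨k, hk, g, hg⟩ := exists_injective_torsionBy_prime hA
  obtain ⟨η, hη⟩ := Prufer.exists_injective_zmod p
  let ι := (η.compLeft (Fin k)).comp g
  have hι : Injective ι := hη.comp_left.comp hg
  obtain ⟨π, hπ⟩ := (Module.Baer.of_divisible _).extension_property_addMonoidHom
    (torsionBy A p).subtype Subtype.val_injective ι
  refine ⟨k, hk, π, fun a hpa hπa => ?_⟩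
  have ha : a ∈ torsionBy A p := torsionBy.nsmul_iff.mpr hpa
  have : ι ⟨a, ha⟩ = 0 := by rw [← hπ]; exact hπa
  exact congrArg Subtype.val ((injective_iff_map_eq_zero ι).mp hι _ this)

theorem DFinsupp.mk_toFinset_apply {ι : Type*} {β : ι → Type*} [∀ i, Zero (β i)]
    [DecidableEq ι] {f : ∀ i, β i} (hf : {i | f i ≠ 0}.Finite) (i : ι) :
    DFinsupp.mk hf.toFinset (fun j => f j) i = f i := by
  by_cases hi : f i = 0 <;> simp [DFinsupp.mk_apply, hi]

section FiniteSupport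

variable {ι A : Type*} [AddCommGroup A] {β : ι → Type*} [∀ i, AddCommGroup (β i)]

def finiteSupportSubgroup (π : ∀ i, A →+ β i) : AddSubgroup A where
  carrier := {a | {i | π i a ≠ 0}.Finite}
  zero_mem' := by simp
  add_mem' {a b} ha hb := (ha.union hb).subset fun i hi => by
    by_contra! h
    simp_all
  neg_mem' := by simp

variable (π : ∀ i, A →+ β i)

noncomputable def finiteSupportSubgroup.toDirectSum [DecidableEq ι] :
    finiteSupportSubgroup π →+ DirectSum ι β where
  toFun a := DFinsupp.mk a.2.toFinset fun i => π i a
  map_zero' := by ext; simp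
  map_add' a b := by
    ext i
    have key (c : finiteSupportSubgroup π) : DFinsupp.mk _ (fun j => π j c) i = π i c :=
      DFinsupp.mk_toFinset_apply (f := fun j => π j c) c.2 i
    rw [DirectSum.add_apply, key, key, key, AddSubgroup.coe_add, map_add]

@[simp]
theorem finiteSupportSubgroup.toDirectSum_apply [DecidableEq ι] (a : finiteSupportSubgroup π)
    (i : ι) :
    toDirectSum π a i = π i a :=
  DFinsupp.mk_toFinset_apply a.2 i

end FiniteSupport

theorem exists_linearMap_finsupp_nat_injective {K V : Type*} [Field K] [AddCommGroup V]
    [Module K V] [Countable V] : ∃ f : V →ₗ[K] (ℕ →₀ K), Injective f := by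
  let b := Module.Free.chooseBasis K V
  have : Countable (Module.Free.ChooseBasisIndex K V) := b.injective.countable
  obtain ⟨j, hj⟩ := (countable_iff_exists_injective _).mp this
  exact ⟨Finsupp.lmapDomain K K j ∘ₗ b.repr.toLinearMap,
    (Finsupp.mapDomain_injective hj).comp b.repr.injective⟩

open TensorProduct in
theorem exists_addMonoidHom_finsupp_rat_ker_le_torsion (A : Type*) [AddCommGroup A]
    [Countable A] : ∃ ψ : A →+ (ℕ →₀ ℚ), ∀ a, ψ a = 0 → IsOfFinAddOrder a := by
  let f := TensorProduct.mk ℤ ℚ A 1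
  have : IsLocalizedModule (nonZeroDivisors ℤ) f :=
    (isLocalizedModule_iff_isBaseChange _ ℚ f).mpr (TensorProduct.isBaseChange ℤ A ℚ)
  have : Countable (ℚ ⊗[ℤ] A) :=
    (IsLocalizedModule.mk'_surjective (nonZeroDivisors ℤ) f).countable
  obtain ⟨g, hg⟩ := exists_linearMap_finsupp_nat_injective (K := ℚ) (V := ℚ ⊗[ℤ] A)
  refine ⟨(g.restrictScalars ℤ ∘ₗ f).toAddMonoidHom, fun a ha => ?_⟩
  obtain ⟨⟨s, hs⟩, hsa⟩ := (IsLocalizedModule.eq_zero_iff (nonZeroDivisors ℤ) f).mp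
    ((injective_iff_map_eq_zero g).mp hg _ ha)
  exact isOfFinAddOrder_iff_zsmul_eq_zero.mpr ⟨s, nonZeroDivisors.ne_zero hs, hsa⟩

theorem torsion_le_finiteSupportSubgroup {A : Type*} [AddCommGroup A] {k : Nat.Primes → ℕ}
    (π : ∀ p, A →+ (Fin (k p) → Prufer p)) :
    AddCommGroup.torsion A ≤ finiteSupportSubgroup π := by
  intro a ha
  have hord : addOrderOf a ≠ 0 := ha.addOrderOf_pos.ne'
  refine ((Nat.divisors (addOrderOf a)).finite_toSet.preimage
    Nat.Primes.coe_nat_injective.injOn).subset fun p hp => ?_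
  simp only [Set.mem_preimage, Finset.mem_coe, Nat.mem_divisors, and_iff_left hord]
  by_contra hpa
  refine hp (funext fun i => Prufer.eq_zero_of_nsmul_eq_zero p ?_ hpa)
  rw [← Pi.smul_apply, ← map_nsmul, addOrderOf_nsmul_eq_zero, map_zero, Pi.zero_apply]

/-- Every countable abelian group containing no copy of `(ℤ/pℤ)^{n+1}` for any
prime `p` embeds into `ℚ^{(ℕ)} ⊕ ⨁_p ℤ(p^∞)^{k_p}` with all `k_p ≤ n`. -/
theorem embeds_into_divisible_of_no_large_elementary (n : ℕ)
    (A : Type*) [AddCommGroup A] [Countable A]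
    (hA : ∀ p : Nat.Primes,
      ¬ ∃ f : (Fin (n + 1) → ZMod (p : ℕ)) →+ A, Function.Injective f) :
    ∃ k : Nat.Primes → ℕ, (∀ p, k p ≤ n) ∧
      ∃ f : A →+ ((ℕ →₀ ℚ) × DirectSum Nat.Primes fun p => Fin (k p) → Prufer p),
        Function.Injective f := by
  choose k hk π hπ using fun p => exists_prufer_pi_injective_on_torsionBy p (hA p)
  obtain ⟨ψ, hψ⟩ := exists_addMonoidHom_finsupp_rat_ker_le_torsion A
  obtain ⟨Φ, hΦ⟩ := (Module.Baer.of_divisible _).extension_property_addMonoidHom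
    (finiteSupportSubgroup π).subtype Subtype.val_injective (finiteSupportSubgroup.toDirectSum π)
  refine ⟨k, hk, ψ.prod Φ, (injective_iff_map_eq_zero _).mpr fun a ha => ?_⟩
  have ha_tors : IsOfFinAddOrder a := hψ a (congrArg Prod.fst ha)
  have ha_supp : a ∈ finiteSupportSubgroup π := torsion_le_finiteSupportSubgroup π ha_tors
  have hπa (p : Nat.Primes) : π p a = 0 := by
    rw [← finiteSupportSubgroup.toDirectSum_apply π ⟨a, ha_supp⟩, ← hΦ]
    exact DFunLike.congr_fun (congrArg Prod.snd ha) p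
  exact ha_tors.eq_zero_of_forall_prime fun q hq m hm =>
    hπ ⟨q, hq⟩ _ hm (by rw [map_nsmul, hπa ⟨q, hq⟩, smul_zero])
end
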